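/- Let g be a standard Gaussian vector in ℝⁿ partitioned into l blocks of size k, and B a set of s blocks. Define z(g) := ‖Σ_{b∉B} g_{V_b}‖₂·(Σ_{b∈B} x⋆_{V_b}/‖x⋆_{V_b}‖₂ − λφ) + Σ_{b∉B} g_{V_b}. Then E‖g − z(g)‖₂² = k·(s + (l − s)·u₂), where u₂ := ‖Σ_{b∈B} x⋆_{V_b}/‖x⋆_{V_b}‖₂ − λφ‖₂². -/

import Mathlib

open MeasureTheory ProbabilityTheory Finset
open scoped Classical

/-- The standard Gaussian measure on `ℝⁿ`. -/
noncomputable def stdGaussian (n : ℕ) : Measure (EuclideanSpace ℝ (Fin n)) :=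
  (Measure.pi fun _ : Fin n => gaussianReal 0 1).map (MeasurableEquiv.toLp 2 (Fin n → ℝ))

/-- Restriction of a vector to a coordinate set (zero elsewhere). -/
noncomputable def restrict' {n : ℕ} (I : Finset (Fin n)) (g : EuclideanSpace ℝ (Fin n)) :
    EuclideanSpace ℝ (Fin n) :=
  WithLp.toLp 2 (fun i => if i ∈ I then g i else 0)

/-!
Put `T = ⋃_{b∉B} V_b` and `w = Σ_{b∈B} x⋆_{V_b}/‖x⋆_{V_b}‖ − λφ`. Since the blocks partition the
coordinates, `g − z(g) = g_{Tᶜ} − ‖g_T‖ w`, so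
`‖g − z(g)‖² = ‖g_{Tᶜ}‖² − 2 ‖g_T‖ ⟪g_{Tᶜ}, w⟫ + ‖g_T‖² ‖w‖²`.
The law of `g` is invariant under flipping the signs of the coordinates in `Tᶜ`, which negates the
cross term, so its expectation vanishes; and `E‖g_I‖² = #I` for every coordinate set `I`.
This gives `#Tᶜ + #T ‖w‖² = k s + k (l − s) ‖w‖²`.
-/

open Function
open scoped RealInnerProductSpace

section StdGaussian

variable {E : Type*} [NormedAddCommGroup E] [InnerProductSpace ℝ E] [FiniteDimensional ℝ E]
  [MeasurableSpace E] [BorelSpace E]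

lemma integrable_norm_sq_stdGaussian :
    Integrable (fun x : E => ‖x‖ ^ 2) (ProbabilityTheory.stdGaussian E) :=
  IsGaussian.memLp_two_id.integrable_norm_pow'

lemma integral_inner_sq_stdGaussian (u : E) :
    ∫ x, ⟪u, x⟫ ^ 2 ∂ProbabilityTheory.stdGaussian E = ‖u‖ ^ 2 := by
  have h := covarianceBilin_apply (μ := ProbabilityTheory.stdGaussian E)
    IsGaussian.memLp_two_id u u
  simpa [covarianceBilin_stdGaussian, innerSL_apply_apply ℝ, sq, real_inner_self_eq_norm_sq]
    using h.symm

lemma integrable_of_abs_le_mul_norm_sq {f : E → ℝ} (hf : Continuous f) (C : ℝ)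
    (hfC : ∀ x, |f x| ≤ C * ‖x‖ ^ 2) : Integrable f (ProbabilityTheory.stdGaussian E) :=
  (integrable_norm_sq_stdGaussian.const_mul C).mono' hf.aestronglyMeasurable
    (Filter.Eventually.of_forall hfC)

lemma integrable_inner_sq_stdGaussian (u : E) :
    Integrable (fun x => ⟪u, x⟫ ^ 2) (ProbabilityTheory.stdGaussian E) :=
  integrable_of_abs_le_mul_norm_sq (by fun_prop) (‖u‖ ^ 2) fun x => by
    rw [abs_sq, ← sq_abs, ← mul_pow]
    exact pow_le_pow_left₀ (abs_nonneg _) (abs_real_inner_le_norm u x) 2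

lemma integral_eq_zero_of_comp_eq_neg (R : E ≃ₗᵢ[ℝ] E) {f : E → ℝ} (hf : ∀ x, f (R x) = -f x) :
    ∫ x, f x ∂ProbabilityTheory.stdGaussian E = 0 := by
  have h := integral_map_equiv (μ := ProbabilityTheory.stdGaussian E)
    R.toHomeomorph.toMeasurableEquiv f
  simp only [Homeomorph.toMeasurableEquiv_coe, LinearIsometryEquiv.coe_toHomeomorph, hf,
    integral_neg] at h
  rw [stdGaussian_map R] at h
  linarith

end StdGaussian

lemma stdGaussian_eq_stdGaussian_euclideanSpace (n : ℕ) :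
    stdGaussian n = ProbabilityTheory.stdGaussian (EuclideanSpace ℝ (Fin n)) :=
  map_pi_eq_stdGaussian

section Partition

variable {α ι : Type*} [DecidableEq α] {V : ι → Finset α}

lemma Finset.compl_biUnion_of_pairwise_disjoint [Fintype α] [Fintype ι] [DecidableEq ι]
    (hV : Pairwise (Disjoint on V)) (hcover : ∀ a, ∃ i, a ∈ V i) (A : Finset ι) :
    (A.biUnion V)ᶜ = Aᶜ.biUnion V := by
  ext a
  obtain ⟨i, hi⟩ := hcover a
  have mem_biUnion_iff (A : Finset ι) : a ∈ A.biUnion V ↔ i ∈ A := by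
    refine ⟨fun ha => ?_, fun hiA => Finset.mem_biUnion.mpr ⟨i, hiA, hi⟩⟩
    obtain ⟨j, hjA, hj⟩ := Finset.mem_biUnion.mp ha
    obtain rfl : j = i := by
      by_contra hji
      exact Finset.disjoint_left.mp (hV hji) hj hi
    exact hjA
  rw [Finset.mem_compl, mem_biUnion_iff, mem_biUnion_iff, Finset.mem_compl]

lemma Finset.card_biUnion_of_card_eq {k : ℕ} (hV : Pairwise (Disjoint on V))
    (hcard : ∀ i, (V i).card = k) (A : Finset ι) : (A.biUnion V).card = A.card * k := by
  rw [Finset.card_biUnion fun i _ j _ h => hV h, Finset.sum_const_nat fun i _ => hcard i]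

end Partition

section Restrict

variable {n : ℕ}

@[simp]
lemma restrict'_apply (I : Finset (Fin n)) (g : EuclideanSpace ℝ (Fin n)) (i : Fin n) :
    restrict' I g i = if i ∈ I then g i else 0 := rfl

@[fun_prop]
lemma continuous_restrict' (I : Finset (Fin n)) : Continuous (restrict' I) :=
  (PiLp.continuous_toLp 2 _).comp <| continuous_pi fun i => by
    split_ifs
    · exact (PiLp.continuous_apply 2 _ i)
    · exact continuous_const

lemma sub_restrict' (I : Finset (Fin n)) (g : EuclideanSpace ℝ (Fin n)) :
    g - restrict' I g = restrict' Iᶜ g := by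
  ext i
  simp only [PiLp.sub_apply, restrict'_apply, Finset.mem_compl]
  split_ifs <;> ring

lemma norm_sq_restrict' (I : Finset (Fin n)) (g : EuclideanSpace ℝ (Fin n)) :
    ‖restrict' I g‖ ^ 2 = ∑ i ∈ I, g i ^ 2 := by
  simp [EuclideanSpace.real_norm_sq_eq, Finset.sum_ite_mem]

lemma norm_restrict'_le (I : Finset (Fin n)) (g : EuclideanSpace ℝ (Fin n)) :
    ‖restrict' I g‖ ≤ ‖g‖ := by
  refine (pow_le_pow_iff_left₀ (norm_nonneg _) (norm_nonneg _) two_ne_zero).mp ?_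
  rw [norm_sq_restrict', EuclideanSpace.real_norm_sq_eq]
  exact Finset.sum_le_univ_sum_of_nonneg fun i => sq_nonneg _

lemma restrict'_eq_sum_single (I : Finset (Fin n)) (g : EuclideanSpace ℝ (Fin n)) :
    restrict' I g = ∑ i ∈ I, EuclideanSpace.single i (g i) := by
  ext j
  simp

lemma sum_restrict'_eq_restrict'_biUnion {l : ℕ} {V : Fin l → Finset (Fin n)}
    (hV : Pairwise (Disjoint on V)) (A : Finset (Fin l)) (g : EuclideanSpace ℝ (Fin n)) :
    ∑ b ∈ A, restrict' (V b) g = restrict' (A.biUnion V) g := by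
  simp only [restrict'_eq_sum_single]
  exact (Finset.sum_biUnion fun b _ b' _ h => hV h).symm

noncomputable def negOn (S : Finset (Fin n)) :
    EuclideanSpace ℝ (Fin n) ≃ₗᵢ[ℝ] EuclideanSpace ℝ (Fin n) :=
  LinearIsometryEquiv.piLpCongrRight 2 fun i =>
    if i ∈ S then LinearIsometryEquiv.neg ℝ else LinearIsometryEquiv.refl ℝ ℝ

lemma restrict'_negOn_self (S : Finset (Fin n)) (g : EuclideanSpace ℝ (Fin n)) :
    restrict' S (negOn S g) = -restrict' S g := by
  ext i
  by_cases h : i ∈ S <;> simp [negOn, h, LinearIsometryEquiv.piLpCongrRight_apply]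

lemma restrict'_negOn_of_disjoint {S T : Finset (Fin n)} (hST : Disjoint S T)
    (g : EuclideanSpace ℝ (Fin n)) : restrict' T (negOn S g) = restrict' T g := by
  ext i
  by_cases h : i ∈ T
  · simp [negOn, h, Finset.disjoint_right.mp hST h, LinearIsometryEquiv.piLpCongrRight_apply]
  · simp [h]

lemma norm_sub_smul_add_restrict'_sq (T : Finset (Fin n)) (g w : EuclideanSpace ℝ (Fin n)) :
    ‖g - (‖restrict' T g‖ • w + restrict' T g)‖ ^ 2 = ‖restrict' Tᶜ g‖ ^ 2
      - 2 * (‖restrict' T g‖ * ⟪restrict' Tᶜ g, w⟫) + ‖restrict' T g‖ ^ 2 * ‖w‖ ^ 2 := by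
  rw [sub_add_eq_sub_sub_swap, sub_restrict', norm_sub_sq_real, real_inner_smul_right,
    norm_smul, norm_norm]
  ring

local notation "γ" => ProbabilityTheory.stdGaussian (EuclideanSpace ℝ (Fin n))

lemma integral_norm_sq_restrict' (I : Finset (Fin n)) :
    ∫ g, ‖restrict' I g‖ ^ 2 ∂γ = I.card := by
  have h (g : EuclideanSpace ℝ (Fin n)) :
      ‖restrict' I g‖ ^ 2 = ∑ i ∈ I, ⟪EuclideanSpace.single i 1, g⟫ ^ 2 := by
    simp [norm_sq_restrict', EuclideanSpace.inner_single_left]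
  simp_rw [h]
  rw [integral_finsetSum _ fun i _ => integrable_inner_sq_stdGaussian _]
  simp [integral_inner_sq_stdGaussian]

lemma integral_norm_restrict'_mul_inner_restrict' {S T : Finset (Fin n)} (hST : Disjoint S T)
    (w : EuclideanSpace ℝ (Fin n)) :
    ∫ g, ‖restrict' T g‖ * ⟪restrict' S g, w⟫ ∂γ = 0 :=
  integral_eq_zero_of_comp_eq_neg (negOn S) fun g => by
    rw [restrict'_negOn_of_disjoint hST, restrict'_negOn_self, inner_neg_left, mul_neg]

lemma integral_norm_sub_smul_add_restrict'_sq (T : Finset (Fin n))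
    (w : EuclideanSpace ℝ (Fin n)) :
    ∫ g, ‖g - (‖restrict' T g‖ • w + restrict' T g)‖ ^ 2 ∂γ = Tᶜ.card + T.card * ‖w‖ ^ 2 := by
  have hsq (I : Finset (Fin n)) : Integrable (fun g => ‖restrict' I g‖ ^ 2) γ :=
    integrable_of_abs_le_mul_norm_sq (by fun_prop) 1 fun g => by
      rw [abs_sq, one_mul]
      exact pow_le_pow_left₀ (norm_nonneg _) (norm_restrict'_le I g) 2
  have hcross : Integrable (fun g => ‖restrict' T g‖ * ⟪restrict' Tᶜ g, w⟫) γ :=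
    integrable_of_abs_le_mul_norm_sq (by fun_prop) ‖w‖ fun g => by
      rw [abs_mul, abs_norm]
      calc ‖restrict' T g‖ * |⟪restrict' Tᶜ g, w⟫|
          ≤ ‖g‖ * (‖g‖ * ‖w‖) := by
            gcongr
            · exact norm_restrict'_le T g
            · exact (abs_real_inner_le_norm _ _).trans
                (mul_le_mul_of_nonneg_right (norm_restrict'_le _ g) (norm_nonneg w))
        _ = ‖w‖ * ‖g‖ ^ 2 := by ring
  simp_rw [norm_sub_smul_add_restrict'_sq]
  rw [integral_add, integral_sub, integral_const_mul, integral_mul_const,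
    integral_norm_sq_restrict', integral_norm_sq_restrict',
    integral_norm_restrict'_mul_inner_restrict' disjoint_compl_left]
  · ring
  exacts [hsq _, hcross.const_mul 2, (hsq _).sub (hcross.const_mul 2), (hsq T).mul_const _]

end Restrict

theorem expected_sq_dist_block_general (n l k s : ℕ) (V : Fin l → Finset (Fin n))
    (hcard : ∀ b, (V b).card = k)
    (hdisj : ∀ b b', b ≠ b' → Disjoint (V b) (V b'))
    (hcover : ∀ i : Fin n, ∃ b, i ∈ V b)
    (B : Finset (Fin l)) (hB : B.card = s)
    (xstar φ : EuclideanSpace ℝ (Fin n)) (lam : ℝ) :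
    (∫ g, ‖g - (‖∑ b ∈ Bᶜ, restrict' (V b) g‖
            • ((∑ b ∈ B, ‖restrict' (V b) xstar‖⁻¹ • restrict' (V b) xstar) - lam • φ)
          + ∑ b ∈ Bᶜ, restrict' (V b) g)‖ ^ 2 ∂(stdGaussian n))
      = (k : ℝ) * ((s : ℝ) + ((l : ℝ) - s)
          * ‖(∑ b ∈ B, ‖restrict' (V b) xstar‖⁻¹ • restrict' (V b) xstar) - lam • φ‖ ^ 2) := by
  have hV : Pairwise (Disjoint on V) := fun b b' h => hdisj b b' h
  set w := (∑ b ∈ B, ‖restrict' (V b) xstar‖⁻¹ • restrict' (V b) xstar) - lam • φ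
  simp_rw [sum_restrict'_eq_restrict'_biUnion hV]
  rw [stdGaussian_eq_stdGaussian_euclideanSpace, integral_norm_sub_smul_add_restrict'_sq,
    Finset.compl_biUnion_of_pairwise_disjoint hV hcover, compl_compl,
    Finset.card_biUnion_of_card_eq hV hcard, Finset.card_biUnion_of_card_eq hV hcard,
    Finset.card_compl, Fintype.card_fin, hB]
  have hsl : s ≤ l := hB ▸ B.card_le_univ.trans_eq (Fintype.card_fin l)
  push_cast [hsl]
  ring

/-- For `g` standard Gaussian with blocks `V₁,…,V_l` of size `k`, block support `B` of
size `s`, and `z(g) := ‖Σ_{b∉B} g_{V_b}‖₂·(Σ_{b∈B} x⋆_{V_b}/‖x⋆_{V_b}‖₂ − λφ) + Σ_{b∉B} g_{V_b}`,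
one has `E‖g − z(g)‖₂² = k·(s + (l − s)·u₂)` with
`u₂ = ‖Σ_{b∈B} x⋆_{V_b}/‖x⋆_{V_b}‖₂ − λφ‖₂²`. -/
theorem expected_sq_dist_block (n l k s : ℕ) (V : Fin l → Finset (Fin n))
    (hcard : ∀ b, (V b).card = k)
    (hdisj : ∀ b b', b ≠ b' → Disjoint (V b) (V b'))
    (hcover : ∀ i : Fin n, ∃ b, i ∈ V b)
    (B : Finset (Fin l)) (hB : B.card = s)
    (xstar φ : EuclideanSpace ℝ (Fin n)) (lam : ℝ)
    (hnz : ∀ b ∈ B, restrict' (V b) xstar ≠ 0) :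
    (∫ g, ‖g - (‖∑ b ∈ Bᶜ, restrict' (V b) g‖
            • ((∑ b ∈ B, ‖restrict' (V b) xstar‖⁻¹ • restrict' (V b) xstar) - lam • φ)
          + ∑ b ∈ Bᶜ, restrict' (V b) g)‖ ^ 2 ∂(stdGaussian n))
      = (k : ℝ) * ((s : ℝ) + ((l : ℝ) - s)
          * ‖(∑ b ∈ B, ‖restrict' (V b) xstar‖⁻¹ • restrict' (V b) xstar) - lam • φ‖ ^ 2) :=
  expected_sq_dist_block_general n l k s V hcard hdisj hcover B hB xstar φ lam
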